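/- arXiv:1409.7743 — 3 statements merged into one kernel-verified Lean document; each statement's English description precedes it below -/
import Mathlib

section
/- Let X be a locally compact separable metric space and let J be a symmetric nonnegative Radon measure on X×X∖diag. Let D be an algebra of bounded Borel measurable complex-valued functions on X such that D ∩ C_c(X) is uniformly dense in C_c(X) and such that df ∈ L²(X×X∖diag, J) for every f ∈ D. Then the space Ω¹(D), i.e. the linear span of the functions (x,y) ↦ f(x)(g(x) − g(y)) and (x,y) ↦ g(y)(f(x) − f(y)) with f, g ∈ D, is dense in L²(X×X∖diag, J). -/
/-!
If `v ∈ L²(J)` is orthogonal to `Ω¹(D)`, then, since `D` is an algebra, `v` is also orthogonal to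
the forms `p(x) q(y) (f(x) − f(y))` with `p, q, f ∈ D`. Hence the integrable function
`ρ = v̄ · df` integrates to zero against `p(x) q(y)`, first for `p, q ∈ D`, then by uniform
approximation and dominated convergence for `p, q ∈ C_c(X)`, then for indicators of compact
rectangles. Compact rectangles form a π-system generating the σ-algebra of `X × X`, so
`v̄ · df = 0` a.e. Finally the continuous elements of `D` separate points (Urysohn's lemma and
density), so the open sets `{f(x) ≠ f(y)}` cover `X × X ∖ diag`, and by Lindelöf countably many
of them suffice: `v = 0` a.e.
-/

open MeasureTheory

def offDiagSwap {X : Type*} (p : {q : X × X // q.1 ≠ q.2}) : {q : X × X // q.1 ≠ q.2} :=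
  ⟨(p.1.2, p.1.1), Ne.symm p.2⟩

open Filter Topology Set MeasurableSpace Submodule
open scoped ComplexConjugate

section DominatedConvergence

variable {Ω : Type*} [MeasurableSpace Ω] {μ : Measure Ω} {ρ : Ω → ℂ}

theorem tendsto_integral_mul_of_bounded (hρ : Integrable ρ μ) {g : ℕ → Ω → ℂ} {g' : Ω → ℂ}
    (hg : ∀ n, AEStronglyMeasurable (g n) μ) {C : ℝ} (hgC : ∀ n ω, ‖g n ω‖ ≤ C)
    (hlim : ∀ ω, Tendsto (fun n ↦ g n ω) atTop (𝓝 (g' ω))) :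
    Tendsto (fun n ↦ ∫ ω, g n ω * ρ ω ∂μ) atTop (𝓝 (∫ ω, g' ω * ρ ω ∂μ)) :=
  tendsto_integral_of_dominated_convergence (fun ω ↦ C * ‖ρ ω‖)
    (fun n ↦ (hg n).mul hρ.aestronglyMeasurable) (hρ.norm.const_mul C)
    (fun n ↦ ae_of_all _ fun ω ↦ by
      rw [norm_mul]; exact mul_le_mul_of_nonneg_right (hgC n ω) (norm_nonneg _))
    (ae_of_all _ fun ω ↦ (hlim ω).mul_const _)

theorem exists_seq_tendsto_of_forall_approx {X : Type*} {P : Set (X → ℂ)} {g : X → ℂ}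
    {C : ℝ} (hgC : ∀ x, ‖g x‖ ≤ C) (hP : ∀ ε > 0, ∃ p ∈ P, ∀ x, ‖p x - g x‖ ≤ ε) :
    ∃ p : ℕ → X → ℂ, (∀ n, p n ∈ P) ∧ (∀ n x, ‖p n x‖ ≤ C + 1) ∧
      ∀ x, Tendsto (fun n ↦ p n x) atTop (𝓝 (g x)) := by
  choose p hpP hp using fun n : ℕ ↦ hP (1 / (n + 1)) Nat.one_div_pos_of_nat
  refine ⟨p, hpP, fun n x ↦ ?_, fun x ↦ ?_⟩
  · calc ‖p n x‖ ≤ ‖p n x - g x‖ + ‖g x‖ := norm_le_norm_sub_add _ _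
      _ ≤ 1 + C := add_le_add ((hp n x).trans (div_le_one_of_le₀ (by simp) (by positivity)))
          (hgC x)
      _ = C + 1 := add_comm _ _
  · rw [tendsto_iff_norm_sub_tendsto_zero]
    exact squeeze_zero (fun _ ↦ norm_nonneg _) (fun n ↦ hp n x)
      tendsto_one_div_add_atTop_nhds_zero_nat

theorem integral_mul_mul_eq_zero_of_forall_approx {X Y : Type*} [MeasurableSpace X]
    [MeasurableSpace Y] {a : Ω → X} {b : Ω → Y} (ha : Measurable a) (hb : Measurable b)
    (hρ : Integrable ρ μ) {P : Set (X → ℂ)} {Q : Set (Y → ℂ)} (hPm : ∀ p ∈ P, Measurable p)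
    (hQm : ∀ q ∈ Q, Measurable q)
    (h0 : ∀ p ∈ P, ∀ q ∈ Q, ∫ ω, p (a ω) * q (b ω) * ρ ω ∂μ = 0)
    {g : X → ℂ} {h : Y → ℂ} {Cg Ch : ℝ} (hgC : ∀ x, ‖g x‖ ≤ Cg) (hhC : ∀ y, ‖h y‖ ≤ Ch)
    (hPg : ∀ ε > 0, ∃ p ∈ P, ∀ x, ‖p x - g x‖ ≤ ε)
    (hQh : ∀ ε > 0, ∃ q ∈ Q, ∀ y, ‖q y - h y‖ ≤ ε) :
    ∫ ω, g (a ω) * h (b ω) * ρ ω ∂μ = 0 := by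
  obtain ⟨p, hpP, hpC, hp⟩ := exists_seq_tendsto_of_forall_approx hgC hPg
  obtain ⟨q, hqQ, hqC, hq⟩ := exists_seq_tendsto_of_forall_approx hhC hQh
  have hlim := tendsto_integral_mul_of_bounded hρ (g := fun n ω ↦ p n (a ω) * q n (b ω))
    (fun n ↦ ((hPm _ (hpP n)).comp ha).mul ((hQm _ (hqQ n)).comp hb) |>.aestronglyMeasurable)
    (fun n ω ↦ norm_mul_le_of_le (hpC n _) (hqC n _)) (fun ω ↦ (hp _).mul (hq _))
  simp only [h0 _ (hpP _) _ (hqQ _)] at hlim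
  exact (tendsto_const_nhds_iff.1 hlim).symm

end DominatedConvergence

theorem MeasureTheory.Integrable.ae_eq_zero_of_forall_setIntegral_eq_zero_of_isPiSystem
    {α E : Type*} [NormedAddCommGroup E] [NormedSpace ℝ E] [CompleteSpace E]
    {m : MeasurableSpace α} {μ : Measure α} {f : α → E} {C : Set (Set α)} (hf : Integrable f μ)
    (hgen : m = generateFrom C) (hC : IsPiSystem C) (huniv : ∫ x, f x ∂μ = 0)
    (h0 : ∀ s ∈ C, ∫ x in s, f x ∂μ = 0) : f =ᵐ[μ] 0 := by
  suffices ∀ s, MeasurableSet s → ∫ x in s, f x ∂μ = 0 from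
    hf.ae_eq_zero_of_forall_setIntegral_eq_zero fun s hs _ ↦ this s hs
  intro s hs
  induction s, hs using induction_on_inter hgen hC with
  | empty => simp
  | basic s hs => exact h0 s hs
  | compl s hs ihs => simpa [ihs, huniv] using integral_add_compl hs hf
  | iUnion s hdisj hs ihs => simp [integral_iUnion hs hdisj hf.integrableOn, ihs]

section CompactRectangles

theorem generateFrom_isCompact_eq (X : Type*) [TopologicalSpace X] [T2Space X]
    [SigmaCompactSpace X] [MeasurableSpace X] [BorelSpace X] :
    generateFrom {K : Set X | IsCompact K} = ‹MeasurableSpace X› := by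
  refine le_antisymm (generateFrom_le fun K hK ↦ hK.measurableSet) ?_
  rw [BorelSpace.measurable_eq (α := X), borel_eq_generateFrom_isClosed]
  refine generateFrom_le fun F hF ↦ ?_
  rw [← inter_univ F, ← iUnion_compactCovering, inter_iUnion]
  exact .iUnion fun n ↦ measurableSet_generateFrom ((isCompact_compactCovering X n).inter_left hF)

theorem isCountablySpanning_isCompact (X : Type*) [TopologicalSpace X] [SigmaCompactSpace X] :
    IsCountablySpanning {K : Set X | IsCompact K} :=
  ⟨compactCovering X, isCompact_compactCovering X, iUnion_compactCovering X⟩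

theorem isPiSystem_isCompact (X : Type*) [TopologicalSpace X] [T2Space X] :
    IsPiSystem {K : Set X | IsCompact K} :=
  fun _ hK _ hL _ ↦ hK.inter hL

theorem IsCompact.exists_seq_tendsto_indicator {X : Type*} [TopologicalSpace X] [T2Space X]
    [LocallyCompactSpace X] [HasOuterApproxClosed X] {K : Set X} (hK : IsCompact K) :
    ∃ t : ℕ → X → ℂ, (∀ n, Continuous (t n)) ∧ (∀ n, HasCompactSupport (t n)) ∧
      (∀ n x, ‖t n x‖ ≤ 1) ∧ ∀ x, Tendsto (fun n ↦ t n x) atTop (𝓝 (K.indicator 1 x)) := by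
  obtain ⟨θ, hθK, -, hθc, hθ01⟩ :=
    exists_continuous_one_zero_of_isCompact hK isClosed_empty (disjoint_empty K)
  set a := hK.isClosed.apprSeq
  refine ⟨fun n x ↦ ((θ x * a n x : ℝ) : ℂ), fun n ↦ by fun_prop,
    fun n ↦ hθc.mul_right.comp_left Complex.ofReal_zero, fun n x ↦ ?_, fun x ↦ ?_⟩
  · rw [Complex.norm_real, Real.norm_eq_abs, abs_le]
    obtain ⟨hθ0, hθ1⟩ := hθ01 x
    have : (a n x : ℝ) ≤ 1 := HasOuterApproxClosed.apprSeq_apply_le_one hK.isClosed n x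
    constructor <;> nlinarith [(a n x).2]
  · have hlim := (Complex.continuous_ofReal.tendsto _).comp <| (NNReal.tendsto_coe.2 <|
      tendsto_pi_nhds.1 (HasOuterApproxClosed.tendsto_apprSeq hK.isClosed) x).const_mul (θ x)
    by_cases hx : x ∈ K
    · simpa [Function.comp_def, hx, hθK hx] using hlim
    · simpa [Function.comp_def, hx] using hlim

variable {X Y : Type*} [TopologicalSpace X] [T2Space X] [SigmaCompactSpace X] [MeasurableSpace X]
  [BorelSpace X] [TopologicalSpace Y] [T2Space Y] [SigmaCompactSpace Y] [MeasurableSpace Y]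
  [BorelSpace Y]

theorem ae_eq_zero_of_forall_setIntegral_prod_isCompact_eq_zero {E : Type*}
    [NormedAddCommGroup E] [NormedSpace ℝ E] [CompleteSpace E] {μ : Measure (X × Y)}
    {f : X × Y → E} (hf : Integrable f μ)
    (h0 : ∀ K L, IsCompact K → IsCompact L → ∫ z in K ×ˢ L, f z ∂μ = 0) : f =ᵐ[μ] 0 := by
  refine hf.ae_eq_zero_of_forall_setIntegral_eq_zero_of_isPiSystem
    (generateFrom_eq_prod (generateFrom_isCompact_eq X) (generateFrom_isCompact_eq Y)
      (isCountablySpanning_isCompact X) (isCountablySpanning_isCompact Y)).symm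
    ((isPiSystem_isCompact X).prod (isPiSystem_isCompact Y)) ?_
    (by rintro _ ⟨K, hK, L, hL, rfl⟩; exact h0 K L hK hL)
  have hmono : Monotone fun n ↦ compactCovering X n ×ˢ compactCovering Y n :=
    fun _ _ hmn ↦ prod_mono (compactCovering_subset X hmn) (compactCovering_subset Y hmn)
  have hcover : ⋃ n, compactCovering X n ×ˢ compactCovering Y n = univ := by
    rw [iUnion_prod_of_monotone (compactCovering_subset X) (compactCovering_subset Y),
      iUnion_compactCovering, iUnion_compactCovering, univ_prod_univ]
  have hlim := tendsto_setIntegral_of_monotone (μ := μ)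
    (fun n ↦ (isCompact_compactCovering X n).measurableSet.prod
      (isCompact_compactCovering Y n).measurableSet) hmono hf.integrableOn
  simp only [h0 _ _ (isCompact_compactCovering X _) (isCompact_compactCovering Y _), hcover,
    setIntegral_univ] at hlim
  exact (tendsto_const_nhds_iff.1 hlim).symm

variable [LocallyCompactSpace X] [HasOuterApproxClosed X] [LocallyCompactSpace Y]
  [HasOuterApproxClosed Y]

theorem ae_eq_zero_of_forall_integral_mul_mul_eq_zero {μ : Measure (X × Y)} {ρ : X × Y → ℂ}
    (hρ : Integrable ρ μ)
    (h0 : ∀ p : X → ℂ, Continuous p → HasCompactSupport p → ∀ q : Y → ℂ, Continuous q →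
      HasCompactSupport q → ∫ z, p z.1 * q z.2 * ρ z ∂μ = 0) :
    ρ =ᵐ[μ] 0 := by
  refine ae_eq_zero_of_forall_setIntegral_prod_isCompact_eq_zero hρ fun K L hK hL ↦ ?_
  obtain ⟨s, hs, hsc, hs1, hslim⟩ := hK.exists_seq_tendsto_indicator
  obtain ⟨t, ht, htc, ht1, htlim⟩ := hL.exists_seq_tendsto_indicator
  have hlim := tendsto_integral_mul_of_bounded hρ (g := fun n z ↦ s n z.1 * t n z.2)
    (fun n ↦ ((hs n).measurable.comp measurable_fst).mul ((ht n).measurable.comp measurable_snd)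
      |>.aestronglyMeasurable)
    (fun n z ↦ (norm_mul_le_of_le (hs1 n z.1) (ht1 n z.2)).trans_eq (one_mul 1))
    (fun z ↦ (hslim z.1).mul (htlim z.2))
  simp only [h0 _ (hs _) (hsc _) _ (ht _) (htc _)] at hlim
  rw [← integral_indicator (hK.measurableSet.prod hL.measurableSet)]
  refine Eq.trans ?_ (tendsto_const_nhds_iff.1 hlim).symm
  congr with z
  rw [← indicator_prod_one, ← indicator_mul_left]
  simp

theorem MeasurableEmbedding.ae_eq_zero_of_forall_integral_mul_mul_eq_zero {Ω : Type*}
    [MeasurableSpace Ω] {μ : Measure Ω} {ρ : Ω → ℂ} {e : Ω → X × Y} (he : MeasurableEmbedding e)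
    (hρ : Integrable ρ μ)
    (h0 : ∀ p : X → ℂ, Continuous p → HasCompactSupport p → ∀ q : Y → ℂ, Continuous q →
      HasCompactSupport q → ∫ ω, p (e ω).1 * q (e ω).2 * ρ ω ∂μ = 0) :
    ρ =ᵐ[μ] 0 := by
  have hextend : Function.extend e ρ 0 ∘ e = ρ := funext (he.injective.extend_apply ρ 0)
  have hzero := _root_.ae_eq_zero_of_forall_integral_mul_mul_eq_zero (μ := μ.map e)
    (he.integrable_map_iff.2 (hextend ▸ hρ)) fun p hp hpc q hq hqc ↦ by
      rw [he.integral_map]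
      simpa only [he.injective.extend_apply] using h0 p hp hpc q hq hqc
  filter_upwards [he.ae_map_iff.1 hzero] with ω hω
  simpa only [he.injective.extend_apply, Pi.zero_apply] using hω

end CompactRectangles

theorem ae_eq_zero_of_forall_ae_mul_eq_zero {Ω M₀ : Type*} [TopologicalSpace Ω]
    [SecondCountableTopology Ω] [MeasurableSpace Ω] {μ : Measure Ω} [MulZeroClass M₀]
    [NoZeroDivisors M₀] [TopologicalSpace M₀] [T1Space M₀] {v : Ω → M₀} {F : Set (Ω → M₀)}
    (hF : ∀ φ ∈ F, Continuous φ) (hsep : ∀ ω, ∃ φ ∈ F, φ ω ≠ 0)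
    (hv : ∀ φ ∈ F, ∀ᵐ ω ∂μ, v ω * φ ω = 0) : v =ᵐ[μ] 0 := by
  obtain ⟨T, hT, hcover⟩ := TopologicalSpace.isOpen_iUnion_countable
    (fun φ : F ↦ {ω | φ.1 ω ≠ 0}) fun φ ↦ isOpen_compl_singleton.preimage (hF φ φ.2)
  filter_upwards [(ae_ball_iff hT).2 fun φ _ ↦ hv φ φ.2] with ω hω
  obtain ⟨φ, hφF, hφω⟩ := hsep ω
  have : ω ∈ ⋃ φ ∈ T, {ω | φ.1 ω ≠ 0} := hcover ▸ mem_iUnion.2 ⟨⟨φ, hφF⟩, hφω⟩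
  obtain ⟨ψ, hψT, hψω⟩ := mem_iUnion₂.1 this
  exact (mul_eq_zero.1 (hω ψ hψT)).resolve_right hψω

theorem exists_mem_continuous_ne_of_forall_approx {X : Type*} [TopologicalSpace X] [T2Space X]
    [LocallyCompactSpace X] {D : Set (X → ℂ)}
    (hD : ∀ g : C(X, ℂ), HasCompactSupport g → ∀ ε > 0,
      ∃ f ∈ D, Continuous f ∧ ∀ x, ‖f x - g x‖ ≤ ε) {x y : X} (hxy : x ≠ y) :
    ∃ f ∈ D, Continuous f ∧ f x ≠ f y := by
  obtain ⟨θ, hθx, hθy, hθc, -⟩ := exists_continuous_one_zero_of_isCompact isCompact_singleton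
    isClosed_singleton (disjoint_singleton.2 hxy)
  let g : C(X, ℂ) := ⟨fun z ↦ (θ z : ℂ), by fun_prop⟩
  obtain ⟨f, hfD, hfc, hfg⟩ := hD g (hθc.comp_left Complex.ofReal_zero) (1 / 3) (by norm_num)
  refine ⟨f, hfD, hfc, fun hfxy ↦ ?_⟩
  have : (1 : ℝ) ≤ 1 / 3 + 1 / 3 := calc
    1 = ‖g x - g y‖ := by simp [g, hθx rfl, hθy rfl]
    _ = ‖(f y - g y) - (f x - g x)‖ := by rw [hfxy]; ring_nf
    _ ≤ ‖f y - g y‖ + ‖f x - g x‖ := norm_sub_le _ _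
    _ ≤ 1 / 3 + 1 / 3 := add_le_add (hfg y) (hfg x)
  norm_num at this

theorem MeasureTheory.L2.integral_conj_mul_eq_zero_of_mem_orthogonal {α 𝕜 : Type*} [RCLike 𝕜]
    [MeasurableSpace α] {μ : Measure α} {K : Submodule 𝕜 (Lp 𝕜 2 μ)} {v : Lp 𝕜 2 μ}
    (hv : v ∈ Kᗮ) {u : α → 𝕜} (hu : MemLp u 2 μ) (huK : hu.toLp u ∈ K) :
    ∫ a, conj (v a) * u a ∂μ = 0 := by
  rw [← inner_left_of_mem_orthogonal huK hv, L2.inner_def]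
  refine integral_congr_ae ?_
  filter_upwards [hu.coeFn_toLp] with a ha
  rw [ha, RCLike.inner_apply, mul_comm]

section OffDiagonal

variable {X : Type*} [MeasurableSpace X] {J : Measure {q : X × X // q.1 ≠ q.2}}
  {D : Subalgebra ℂ (X → ℂ)}

def elementaryOneForms (J : Measure {q : X × X // q.1 ≠ q.2}) (D : Subalgebra ℂ (X → ℂ)) :
    Set (Lp ℂ 2 J) :=
  {h | ∃ f ∈ D, ∃ g ∈ D,
    (∀ᵐ p ∂J, h p = f p.1.1 * (g p.1.1 - g p.1.2)) ∨
    (∀ᵐ p ∂J, h p = g p.1.2 * (f p.1.1 - f p.1.2))}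

theorem integral_mul_mul_conj_mul_sub_eq_zero (hmeas : ∀ f ∈ D, Measurable f)
    (hbdd : ∀ f ∈ D, ∃ C : ℝ, ∀ x, ‖f x‖ ≤ C)
    (hL2 : ∀ f ∈ D, MemLp (fun p : {q : X × X // q.1 ≠ q.2} ↦ f p.1.1 - f p.1.2) 2 J)
    {v : Lp ℂ 2 J} (hv : v ∈ (span ℂ (elementaryOneForms J D))ᗮ) {p q f : X → ℂ}
    (hp : p ∈ D) (hq : q ∈ D) (hf : f ∈ D) :
    ∫ ω, p ω.1.1 * q ω.1.2 * (conj (v ω) * (f ω.1.1 - f ω.1.2)) ∂J = 0 := by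
  have hgen : ∀ f ∈ D, ∀ g ∈ D, ∃ hu : MemLp (fun ω ↦ g ω.1.2 * (f ω.1.1 - f ω.1.2)) 2 J,
      hu.toLp _ ∈ elementaryOneForms J D := by
    intro f hf g hg
    obtain ⟨C, hC⟩ := hbdd g hg
    have hu := (hL2 f hf).mul (r := 2) (memLp_top_of_bound ((hmeas g hg).comp
      (measurable_snd.comp measurable_subtype_coe)).aestronglyMeasurable C (ae_of_all _ (hC ·.1.2)))
    exact ⟨hu, f, hf, g, hg, Or.inr hu.coeFn_toLp⟩
  obtain ⟨h₁, h₁S⟩ := hgen (p * f) (mul_mem hp hf) q hq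
  obtain ⟨h₂, h₂S⟩ := hgen p hp (q * f) (mul_mem hq hf)
  -- `p(x) q(y) df = q(y) d(pf) − (qf)(y) dp`
  rw [← L2.integral_conj_mul_eq_zero_of_mem_orthogonal hv (h₁.sub h₂)
    (by rw [MemLp.toLp_sub h₁ h₂]; exact sub_mem (subset_span h₁S) (subset_span h₂S))]
  congr with ω
  simp only [Pi.sub_apply, Pi.mul_apply]
  ring

theorem conj_mul_sub_ae_eq_zero_of_mem_orthogonal [TopologicalSpace X] [T2Space X]
    [SecondCountableTopology X] [LocallyCompactSpace X] [HasOuterApproxClosed X] [BorelSpace X]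
    (hmeas : ∀ f ∈ D, Measurable f) (hbdd : ∀ f ∈ D, ∃ C : ℝ, ∀ x, ‖f x‖ ≤ C)
    (hdense : ∀ g : X → ℂ, Continuous g → HasCompactSupport g → ∀ ε > 0,
      ∃ f ∈ D, ∀ x, ‖f x - g x‖ ≤ ε)
    (hL2 : ∀ f ∈ D, MemLp (fun p : {q : X × X // q.1 ≠ q.2} ↦ f p.1.1 - f p.1.2) 2 J)
    {v : Lp ℂ 2 J} (hv : v ∈ (span ℂ (elementaryOneForms J D))ᗮ) {f : X → ℂ} (hf : f ∈ D) :
    (fun ω ↦ conj (v ω) * (f ω.1.1 - f ω.1.2)) =ᵐ[J] 0 := by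
  have hval : MeasurableEmbedding (Subtype.val : {q : X × X // q.1 ≠ q.2} → X × X) :=
    .subtype_coe (isClosed_diagonal.isOpen_compl.measurableSet)
  refine hval.ae_eq_zero_of_forall_integral_mul_mul_eq_zero
    ((Lp.memLp v).star.integrable_mul (hL2 f hf)) fun g hg hgc h hh hhc ↦ ?_
  obtain ⟨Cg, hCg⟩ := hg.bounded_above_of_compact_support hgc
  obtain ⟨Ch, hCh⟩ := hh.bounded_above_of_compact_support hhc
  exact integral_mul_mul_eq_zero_of_forall_approx (measurable_fst.comp measurable_subtype_coe)
    (measurable_snd.comp measurable_subtype_coe) ((Lp.memLp v).star.integrable_mul (hL2 f hf))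
    hmeas hmeas (fun p hp q hq ↦ integral_mul_mul_conj_mul_sub_eq_zero hmeas hbdd hL2 hv hp hq hf)
    hCg hCh (hdense g hg hgc) (hdense h hh hhc)

end OffDiagonal

theorem elementary_one_forms_dense_general
    {X : Type*} [MetricSpace X] [TopologicalSpace.SeparableSpace X]
    [LocallyCompactSpace X] [MeasurableSpace X] [BorelSpace X]
    (J : Measure {q : X × X // q.1 ≠ q.2})
    (D : Subalgebra ℂ (X → ℂ))
    (hmeas : ∀ f ∈ D, Measurable f)
    (hbdd : ∀ f ∈ D, ∃ C : ℝ, ∀ x, ‖f x‖ ≤ C)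
    (hdense : ∀ g : C(X, ℂ), HasCompactSupport ⇑g → ∀ ε > 0,
      ∃ f ∈ D, Continuous f ∧ HasCompactSupport f ∧ ∀ x, ‖f x - g x‖ ≤ ε)
    (hL2 : ∀ f ∈ D,
      MemLp (fun p : {q : X × X // q.1 ≠ q.2} => f p.1.1 - f p.1.2) 2 J) :
    Dense (↑(Submodule.span ℂ
      {h : Lp ℂ 2 J | ∃ f ∈ D, ∃ g ∈ D,
        (∀ᵐ p ∂J, h p = f p.1.1 * (g p.1.1 - g p.1.2)) ∨
        (∀ᵐ p ∂J, h p = g p.1.2 * (f p.1.1 - f p.1.2))}) : Set (Lp ℂ 2 J)) := by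
  change Dense (span ℂ (elementaryOneForms J D) : Set (Lp ℂ 2 J))
  rw [dense_iff_topologicalClosure_eq_top, topologicalClosure_eq_top_iff, Submodule.eq_bot_iff]
  intro v hv
  have hsep : ∀ ω : {q : X × X // q.1 ≠ q.2},
      ∃ φ ∈ {φ | ∃ f ∈ D, Continuous f ∧ φ = fun ω ↦ f ω.1.1 - f ω.1.2}, φ ω ≠ 0 := by
    intro ω
    obtain ⟨f, hfD, hfc, hne⟩ := exists_mem_continuous_ne_of_forall_approx
      (fun g hg ε hε ↦ (hdense g hg ε hε).imp fun _ ⟨hfD, hfc, _, hfg⟩ ↦ ⟨hfD, hfc, hfg⟩) ω.2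
    exact ⟨_, ⟨f, hfD, hfc, rfl⟩, sub_ne_zero.2 hne⟩
  have hconj := ae_eq_zero_of_forall_ae_mul_eq_zero (v := fun ω ↦ conj (v ω))
    (by rintro _ ⟨f, -, hfc, rfl⟩; fun_prop) hsep (by
      rintro _ ⟨f, hf, -, rfl⟩
      exact conj_mul_sub_ae_eq_zero_of_mem_orthogonal hmeas hbdd
        (fun g hg hgc ε hε ↦ (hdense ⟨g, hg⟩ hgc ε hε).imp fun _ ⟨hfD, _, _, hfg⟩ ↦ ⟨hfD, hfg⟩)
        hL2 hv hf)
  rw [Lp.eq_zero_iff_ae_eq_zero]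
  filter_upwards [hconj] with ω hω
  simpa using hω

/-- **Density of elementary 1-forms in `L²(X × X ∖ diag, J)`** (Lemma 3.1 of the paper).
Let `X` be a locally compact separable metric space and `J` a symmetric nonnegative Radon
measure on `X × X ∖ diag`. If `D` is an algebra of bounded Borel measurable complex
functions on `X` such that `D ∩ C_c(X)` is uniformly dense in `C_c(X)` and `df ∈ L²(J)`
for every `f ∈ D`, then the span of the elementary forms `g df` and `(df) g`, i.e. of
`(x,y) ↦ f(x)(g(x) − g(y))` and `(x,y) ↦ g(y)(f(x) − f(y))` with `f, g ∈ D`, is dense in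
`L²(X × X ∖ diag, J)`. -/
theorem elementary_one_forms_dense
    {X : Type*} [MetricSpace X] [TopologicalSpace.SeparableSpace X]
    [LocallyCompactSpace X] [MeasurableSpace X] [BorelSpace X]
    (J : Measure {q : X × X // q.1 ≠ q.2})
    [IsLocallyFiniteMeasure J] [IsFiniteMeasureOnCompacts J] [J.InnerRegular]
    (hJsymm : Measure.map offDiagSwap J = J)
    (D : Subalgebra ℂ (X → ℂ))
    (hmeas : ∀ f ∈ D, Measurable f)
    (hbdd : ∀ f ∈ D, ∃ C : ℝ, ∀ x, ‖f x‖ ≤ C)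
    (hdense : ∀ g : C(X, ℂ), HasCompactSupport ⇑g → ∀ ε > 0,
      ∃ f ∈ D, Continuous f ∧ HasCompactSupport f ∧ ∀ x, ‖f x - g x‖ ≤ ε)
    (hL2 : ∀ f ∈ D,
      MemLp (fun p : {q : X × X // q.1 ≠ q.2} => f p.1.1 - f p.1.2) 2 J) :
    Dense (↑(Submodule.span ℂ
      {h : Lp ℂ 2 J | ∃ f ∈ D, ∃ g ∈ D,
        (∀ᵐ p ∂J, h p = f p.1.1 * (g p.1.1 - g p.1.2)) ∨
        (∀ᵐ p ∂J, h p = g p.1.2 * (f p.1.1 - f p.1.2))}) : Set (Lp ℂ 2 J)) :=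
  elementary_one_forms_dense_general J D hmeas hbdd hdense hL2
end

section
/- Let X be a locally compact separable metric space. Then the linear span of the set of functions (x,y) ↦ f(x)g(y), where f, g ∈ C_c(X) have disjoint supports, restricted to X×X∖diag, is dense with respect to the supremum norm in the space C₀(X×X∖diag) of continuous functions on X×X∖diag vanishing at infinity. -/
set_option linter.unusedSectionVars false

open ZeroAtInftyContinuousMap
open scoped ZeroAtInfty

noncomputable section SWC0

open Filter Topology

variable {Y : Type*} [MetricSpace Y] [LocallyCompactSpace Y]

/-- Extension-by-zero of a `C₀` function to the one-point compactification. -/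
def swExt (m : C₀(Y, ℂ)) : C(OnePoint Y, ℂ) :=
  OnePoint.continuousMapMk m.toContinuousMap 0
    (by rw [Filter.coclosedCompact_eq_cocompact]; exact zero_at_infty m)

@[simp] lemma swExt_coe (m : C₀(Y, ℂ)) (y : Y) : swExt m (y : OnePoint Y) = m y := rfl

@[simp] lemma swExt_infty (m : C₀(Y, ℂ)) : swExt m (OnePoint.infty) = 0 := rfl

/-- Extension-by-zero as a linear map. -/
def swExtL : C₀(Y, ℂ) →ₗ[ℂ] C(OnePoint Y, ℂ) where
  toFun := swExt
  map_add' m n := by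
    ext x
    induction x using OnePoint.rec with
    | infty => simp
    | coe y => simp
  map_smul' c m := by
    ext x
    induction x using OnePoint.rec with
    | infty => simp
    | coe y => simp

@[simp] lemma swExtL_coe (m : C₀(Y, ℂ)) (y : Y) : swExtL m (y : OnePoint Y) = m y := rfl

@[simp] lemma swExtL_infty (m : C₀(Y, ℂ)) : swExtL m (OnePoint.infty) = 0 := rfl

lemma swExt_mul (m n : C₀(Y, ℂ)) : swExtL (m * n) = swExtL m * swExtL n := by
  ext x
  induction x using OnePoint.rec with
  | infty => simp
  | coe y => simp

lemma swExt_star (m : C₀(Y, ℂ)) : swExtL (star m) = star (swExtL m) := by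
  ext x
  induction x using OnePoint.rec with
  | infty => simp
  | coe y => simp

lemma norm_le_norm_swExt (m : C₀(Y, ℂ)) : ‖m‖ ≤ ‖swExtL m‖ := by
  rw [← norm_toBCF_eq_norm]
  refine (BoundedContinuousFunction.norm_le (norm_nonneg _)).2 fun y => ?_
  calc ‖m.toBCF y‖ = ‖swExtL m (y : OnePoint Y)‖ := rfl
    _ ≤ ‖swExtL m‖ := (swExtL m).norm_coe_le_norm _

/-- Stone–Weierstrass for `C₀` of a locally compact metric space: a subset closed under
multiplication and star that separates points and vanishes nowhere spans a dense submodule. -/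
theorem dense_span_of_separates (S : Set C₀(Y, ℂ))
    (hmul : ∀ a ∈ S, ∀ b ∈ S, a * b ∈ S)
    (hstar : ∀ a ∈ S, star a ∈ S)
    (hsep : ∀ p q : Y, p ≠ q → ∃ h ∈ S, h p ≠ h q)
    (hnz : ∀ p : Y, ∃ h ∈ S, h p ≠ 0) :
    Dense (↑(Submodule.span ℂ S) : Set C₀(Y, ℂ)) := by
  set M : Submodule ℂ C₀(Y, ℂ) := Submodule.span ℂ S with hM
  -- span is closed under multiplication
  have Mmul : ∀ a ∈ M, ∀ b ∈ M, a * b ∈ M := by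
    intro a ha b hb
    induction ha using Submodule.span_induction generalizing b with
    | mem x hx =>
      induction hb using Submodule.span_induction with
      | mem y hy => exact Submodule.subset_span (hmul _ hx _ hy)
      | zero => simpa using zero_mem M
      | add y z _ _ hy hz => rw [mul_add]; exact add_mem hy hz
      | smul c y _ hy => rw [mul_smul_comm]; exact Submodule.smul_mem M c hy
    | zero => simpa using zero_mem M
    | add x y _ _ hx hy => rw [add_mul]; exact add_mem (hx b hb) (hy b hb)
    | smul c x _ hx => rw [smul_mul_assoc]; exact Submodule.smul_mem M c (hx b hb)
  have Mstar : ∀ a ∈ M, star a ∈ M := by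
    intro a ha
    induction ha using Submodule.span_induction with
    | mem x hx => exact Submodule.subset_span (hstar _ hx)
    | zero => simpa using zero_mem M
    | add x y _ _ hx hy => rw [star_add]; exact add_mem hx hy
    | smul c x _ hx =>
      rw [star_smul]
      exact Submodule.smul_mem M _ hx
  -- the image of M in C(OnePoint Y, ℂ) as a non-unital star subalgebra
  let N : NonUnitalStarSubalgebra ℂ C(OnePoint Y, ℂ) :=
    { M.map swExtL with
      mul_mem' := by
        rintro a b ⟨m, hm, rfl⟩ ⟨n, hn, rfl⟩
        exact ⟨m * n, Mmul m hm n hn, swExt_mul m n⟩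
      star_mem' := by
        rintro a ⟨m, hm, rfl⟩
        exact ⟨star m, Mstar m hm, swExt_star m⟩ }
  have hNinfty : ∀ a ∈ N, a OnePoint.infty = 0 := by
    rintro a ⟨m, hm, rfl⟩
    simp
  -- the unital star subalgebra it generates
  let A : StarSubalgebra ℂ C(OnePoint Y, ℂ) := StarAlgebra.adjoin ℂ (N : Set C(OnePoint Y, ℂ))
  have hNA : (N : Set C(OnePoint Y, ℂ)) ⊆ A := StarAlgebra.subset_adjoin ℂ _
  have hAsep : A.SeparatesPoints := by
    intro p q hpq
    induction p using OnePoint.rec with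
    | infty =>
      induction q using OnePoint.rec with
      | infty => exact absurd rfl hpq
      | coe y =>
        obtain ⟨h, hhS, hh⟩ := hnz y
        refine ⟨_, ⟨swExtL h, hNA ⟨h, Submodule.subset_span hhS, rfl⟩, rfl⟩, ?_⟩
        simpa using (Ne.symm hh)
    | coe x =>
      induction q using OnePoint.rec with
      | infty =>
        obtain ⟨h, hhS, hh⟩ := hnz x
        refine ⟨_, ⟨swExtL h, hNA ⟨h, Submodule.subset_span hhS, rfl⟩, rfl⟩, ?_⟩
        simpa using hh
      | coe y =>
        have hxy : x ≠ y := fun h => hpq (by rw [h])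
        obtain ⟨h, hhS, hh⟩ := hsep x y hxy
        refine ⟨_, ⟨swExtL h, hNA ⟨h, Submodule.subset_span hhS, rfl⟩, rfl⟩, ?_⟩
        simpa using hh
  have hSW : A.topologicalClosure = ⊤ :=
    ContinuousMap.starSubalgebra_topologicalClosure_eq_top_of_separatesPoints A hAsep
  -- evaluation at infinity
  let φ : C(OnePoint Y, ℂ) →⋆ₐ[ℂ] ℂ := ContinuousMap.evalStarAlgHom ℂ ℂ (OnePoint.infty)
  have hφc : Continuous φ := ContinuousEvalConst.continuous_eval_const _
  -- A ∩ ker φ ⊆ N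
  have hAN : (A : Set C(OnePoint Y, ℂ)) ∩ (RingHom.ker φ : Set C(OnePoint Y, ℂ)) ⊆ N := by
    rintro a ⟨haA, haK⟩
    have : a ∈ Submodule.span ℂ {(1 : C(OnePoint Y, ℂ))} ⊔ N.toSubmodule := by
      rw [← StarAlgebra.adjoin_nonUnitalStarSubalgebra_eq_span]
      exact haA
    rw [Submodule.mem_sup] at this
    obtain ⟨y, hy, z, hz, rfl⟩ := this
    rw [Submodule.mem_span_singleton] at hy
    obtain ⟨c, rfl⟩ := hy
    have hz' : z ∈ N := hz
    have hφz : φ z = 0 := hNinfty z hz'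
    have hφa : φ (c • (1 : C(OnePoint Y, ℂ)) + z) = 0 := haK
    rw [map_add, map_smul, map_one, hφz, add_zero, smul_eq_mul, mul_one] at hφa
    rw [hφa, zero_smul, zero_add]
    exact hz'
  -- conclude density
  intro h
  have h1 : swExtL h ∈ closure (A : Set C(OnePoint Y, ℂ)) := by
    have : closure (A : Set C(OnePoint Y, ℂ)) = (A.topologicalClosure : Set C(OnePoint Y, ℂ)) :=
      rfl
    rw [this, hSW]
    trivial
  have h2 : swExtL h ∈ (RingHom.ker φ : Set C(OnePoint Y, ℂ)) := by
    simp only [SetLike.mem_coe, RingHom.mem_ker]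
    show swExtL h OnePoint.infty = 0
    simp
  have h3 : swExtL h ∈ closure ((A : Set C(OnePoint Y, ℂ)) ∩ (RingHom.ker φ)) := by
    rw [ContinuousMap.AlgHom.closure_ker_inter φ hφc A]
    exact ⟨h1, h2⟩
  have h4 : swExtL h ∈ closure (N : Set C(OnePoint Y, ℂ)) :=
    closure_mono hAN h3
  rw [Metric.mem_closure_iff]
  intro ε hε
  rw [Metric.mem_closure_iff] at h4
  obtain ⟨b, hb, hdist⟩ := h4 ε hε
  obtain ⟨m, hm, rfl⟩ := hb
  refine ⟨m, hm, ?_⟩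
  rw [dist_eq_norm] at hdist ⊢
  calc ‖h - m‖ ≤ ‖swExtL (h - m)‖ := norm_le_norm_swExt _
    _ = ‖swExtL h - swExtL m‖ := by rw [map_sub]
    _ < ε := hdist

end SWC0

noncomputable section SWBump

open Metric

variable {X : Type*} [MetricSpace X] [LocallyCompactSpace X]

lemma sw_exists_bump (a : X) (U : Set X) (hU : U ∈ nhds a) :
    ∃ f : C(X, ℂ), HasCompactSupport ⇑f ∧ tsupport ⇑f ⊆ U ∧ f a = 1 := by
  obtain ⟨r₀, hr₀, hcomp⟩ := exists_isCompact_closedBall a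
  obtain ⟨r₁, hr₁, hball⟩ := Metric.mem_nhds_iff.1 hU
  set r : ℝ := min r₀ (r₁ / 2) with hrdef
  have hrpos : 0 < r := lt_min hr₀ (by linarith)
  set f : C(X, ℂ) := ⟨fun x => ((max 0 (1 - dist x a / r) : ℝ) : ℂ), by fun_prop⟩ with hf
  have hsupp : tsupport ⇑f ⊆ closedBall a r := by
    apply closure_minimal _ Metric.isClosed_closedBall
    intro x hx
    simp only [Function.mem_support, ne_eq, hf, ContinuousMap.coe_mk] at hx
    by_contra hxr
    apply hx
    have h1 : r ≤ dist x a := by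
      by_contra hlt
      exact hxr (mem_closedBall.2 (le_of_lt (lt_of_not_ge hlt)))
    have h2 : (1 : ℝ) ≤ dist x a / r := (one_le_div hrpos).2 h1
    have h3 : max 0 (1 - dist x a / r) = 0 := max_eq_left (by linarith)
    rw [h3]
    norm_num
  refine ⟨f, ?_, ?_, ?_⟩
  · exact IsCompact.of_isClosed_subset hcomp (isClosed_tsupport _)
      (hsupp.trans (closedBall_subset_closedBall (min_le_left _ _)))
  · refine hsupp.trans ((closedBall_subset_ball ?_).trans hball)
    exact lt_of_le_of_lt (min_le_right _ _) (by linarith)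
  · simp [hf, dist_self, hrpos.ne']

lemma sw_exists_pair (a b : X) (hab : a ≠ b) (V W : Set X) (hV : V ∈ nhds a) (hW : W ∈ nhds b) :
    ∃ f g : C(X, ℂ), HasCompactSupport ⇑f ∧ HasCompactSupport ⇑g ∧
      Disjoint (tsupport ⇑f) (tsupport ⇑g) ∧ f a = 1 ∧ g b = 1 ∧
      tsupport ⇑f ⊆ V ∧ tsupport ⇑g ⊆ W := by
  have hd : 0 < dist a b := dist_pos.2 hab
  obtain ⟨f, hf, hfV, hfa⟩ := sw_exists_bump a (V ∩ ball a (dist a b / 2))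
    (Filter.inter_mem hV (ball_mem_nhds a (by linarith)))
  obtain ⟨g, hg, hgW, hgb⟩ := sw_exists_bump b (W ∩ ball b (dist a b / 2))
    (Filter.inter_mem hW (ball_mem_nhds b (by linarith)))
  refine ⟨f, g, hf, hg, ?_, hfa, hgb, hfV.trans Set.inter_subset_left,
    hgW.trans Set.inter_subset_left⟩
  refine Set.disjoint_left.2 fun x hxf hxg => ?_
  have h1 : dist x a < dist a b / 2 := mem_ball.1 (hfV hxf).2
  have h2 : dist x b < dist a b / 2 := mem_ball.1 (hgW hxg).2
  have h3 : dist a b ≤ dist a x + dist x b := dist_triangle a x b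
  rw [dist_comm a x] at h3
  linarith

/-- The elementary function `(x, y) ↦ f(x) g(y)` restricted off the diagonal, as an element
of `C₀`. -/
def swElem (f g : C(X, ℂ)) (hf : HasCompactSupport ⇑f) (hg : HasCompactSupport ⇑g)
    (hd : Disjoint (tsupport ⇑f) (tsupport ⇑g)) : C₀({q : X × X // q.1 ≠ q.2}, ℂ) where
  toFun p := f p.1.1 * g p.1.2
  continuous_toFun := by fun_prop
  zero_at_infty' := by
    apply HasCompactSupport.is_zero_at_infty
    have hK : IsCompact (tsupport ⇑f ×ˢ tsupport ⇑g) := hf.prod hg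
    have hKY : (tsupport ⇑f ×ˢ tsupport ⇑g) ⊆ {q : X × X | q.1 ≠ q.2} := by
      rintro ⟨x, y⟩ ⟨hx, hy⟩ h
      simp only [Set.mem_setOf_eq] at h
      exact Set.disjoint_left.1 hd hx (h ▸ hy)
    have hK' : IsCompact ((Subtype.val : {q : X × X // q.1 ≠ q.2} → X × X) ⁻¹'
        (tsupport ⇑f ×ˢ tsupport ⇑g)) := by
      rw [Topology.IsEmbedding.subtypeVal.isCompact_iff, Set.image_preimage_eq_inter_range,
        Subtype.range_coe_subtype, Set.inter_eq_left.2 hKY]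
      exact hK
    exact HasCompactSupport.intro hK' fun p hp => by
      simp only [Set.mem_preimage, Set.mem_prod, not_and_or] at hp
      show f (p : X × X).1 * g (p : X × X).2 = 0
      rcases hp with h | h
      · rw [image_eq_zero_of_notMem_tsupport h, zero_mul]
      · rw [image_eq_zero_of_notMem_tsupport h, mul_zero]

end SWBump

/-- **The Stone–Weierstrass step** in the proof of the density of elementary 1-forms in
`L²(X × X ∖ diag, J)` (Lemma 3.1 of the paper). For a locally compact separable metric
space `X`, the span of the products `(x,y) ↦ f(x)g(y)` with `f, g ∈ C_c(X)` of disjoint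
supports, restricted to the off-diagonal, is uniformly dense in
`C₀(X × X ∖ diag, ℂ)`. -/
theorem disjoint_support_products_dense
    {X : Type*} [MetricSpace X] [TopologicalSpace.SeparableSpace X]
    [LocallyCompactSpace X] :
    Dense (↑(Submodule.span ℂ
      {h : C₀({q : X × X // q.1 ≠ q.2}, ℂ) | ∃ f g : C(X, ℂ),
        HasCompactSupport ⇑f ∧ HasCompactSupport ⇑g ∧
        Disjoint (tsupport ⇑f) (tsupport ⇑g) ∧
        ∀ p : {q : X × X // q.1 ≠ q.2}, h p = f p.1.1 * g p.1.2}) :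
      Set C₀({q : X × X // q.1 ≠ q.2}, ℂ)) := by
  haveI : LocallyCompactSpace {q : X × X // q.1 ≠ q.2} :=
    (isOpen_ne_fun continuous_fst continuous_snd).locallyCompactSpace
  apply dense_span_of_separates
  · -- closed under multiplication
    rintro a ⟨f₁, g₁, hf₁, hg₁, hd₁, hv₁⟩ b ⟨f₂, g₂, hf₂, hg₂, hd₂, hv₂⟩
    refine ⟨f₁ * f₂, g₁ * g₂, ?_, ?_, ?_, ?_⟩
    · rw [ContinuousMap.coe_mul]; exact hf₁.mul_right
    · rw [ContinuousMap.coe_mul]; exact hg₁.mul_right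
    · refine Set.disjoint_of_subset ?_ ?_ hd₁
      · rw [ContinuousMap.coe_mul]; exact tsupport_mul_subset_left
      · rw [ContinuousMap.coe_mul]; exact tsupport_mul_subset_left
    · intro p
      rw [ZeroAtInftyContinuousMap.mul_apply, hv₁ p, hv₂ p,
        ContinuousMap.mul_apply, ContinuousMap.mul_apply]
      ring
  · -- closed under star
    rintro a ⟨f, g, hf, hg, hd, hv⟩
    have hsup : ∀ u : C(X, ℂ), Function.support ⇑(star u) = Function.support ⇑u := by
      intro u
      ext x
      simp [star_eq_zero]
    have hts : ∀ u : C(X, ℂ), tsupport ⇑(star u) = tsupport ⇑u := by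
      intro u
      unfold tsupport
      rw [hsup]
    refine ⟨star f, star g, ?_, ?_, ?_, ?_⟩
    · rw [hasCompactSupport_def, hsup]; exact hf
    · rw [hasCompactSupport_def, hsup]; exact hg
    · rw [hts, hts]; exact hd
    · intro p
      rw [ZeroAtInftyContinuousMap.star_apply, hv p]
      simp [star_mul']
  · -- separates points
    rintro p q hpq
    by_cases hac : (p : X × X).1 = (q : X × X).1
    · have hbd : (p : X × X).2 ≠ (q : X × X).2 := by
        intro hbd'
        exact hpq (Subtype.ext (Prod.ext hac hbd'))
      obtain ⟨f, g, hf, hg, hd, hfa, hgb, _, hgW⟩ :=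
        sw_exists_pair (p : X × X).1 (p : X × X).2 p.2 Set.univ ({(q : X × X).2}ᶜ)
          Filter.univ_mem (isOpen_compl_singleton.mem_nhds hbd)
      refine ⟨swElem f g hf hg hd, ⟨f, g, hf, hg, hd, fun _ => rfl⟩, ?_⟩
      have hq2 : g (q : X × X).2 = 0 :=
        image_eq_zero_of_notMem_tsupport fun hmem => (hgW hmem) rfl
      show f (p : X × X).1 * g (p : X × X).2 ≠ f (q : X × X).1 * g (q : X × X).2
      rw [hfa, hgb, hq2, mul_zero, one_mul]
      exact one_ne_zero
    · obtain ⟨f, g, hf, hg, hd, hfa, hgb, hfV, _⟩ :=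
        sw_exists_pair (p : X × X).1 (p : X × X).2 p.2 ({(q : X × X).1}ᶜ) Set.univ
          (isOpen_compl_singleton.mem_nhds hac) Filter.univ_mem
      refine ⟨swElem f g hf hg hd, ⟨f, g, hf, hg, hd, fun _ => rfl⟩, ?_⟩
      have hq1 : f (q : X × X).1 = 0 :=
        image_eq_zero_of_notMem_tsupport fun hmem => (hfV hmem) rfl
      show f (p : X × X).1 * g (p : X × X).2 ≠ f (q : X × X).1 * g (q : X × X).2
      rw [hfa, hgb, hq1, one_mul, zero_mul]
      exact one_ne_zero
  · -- vanishes nowhere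
    intro p
    obtain ⟨f, g, hf, hg, hd, hfa, hgb, _, _⟩ :=
      sw_exists_pair (p : X × X).1 (p : X × X).2 p.2 Set.univ Set.univ
        Filter.univ_mem Filter.univ_mem
    refine ⟨swElem f g hf hg hd, ⟨f, g, hf, hg, hd, fun _ => rfl⟩, ?_⟩
    show f (p : X × X).1 * g (p : X × X).2 ≠ 0
    rw [hfa, hgb, one_mul]
    exact one_ne_zero
end

section
/- Let X be a measurable space, m a nonnegative measure on X×X, f : X → ℂ measurable with |f(x)| ≤ C for all x ∈ X and ∫ |f(x) − f(y)|² dm < ∞, and a : X×X → ℝ measurable with ∫ a² dm < ∞ and ∫ |f(y)|² a(x,y)⁴ dm(x,y) < ∞. Set I₁(x,y) = f(x) − f(y) − i a(x,y) f(y) and I₂(x,y) = f(x) − e^{i a(x,y)} f(y). Then | ∫ |I₁|² dm − ∫ |I₂|² dm | ≤ 2 ( ∫ |f(y)|² a(x,y)⁴ dm )^{1/2} · ( ∫ |f(x) − f(y)|² dm + C² ∫ a² dm )^{1/2}. -/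
/-!
Pointwise, `I₁ - I₂ = (e^{ia} - 1 - ia) f(y)` has modulus at most `a² |f(y)| / 2`, because
`|d/ds (e^{is} - 1 - is)| = |e^{is} - 1| ≤ |s|`; and both `|I₁|` and `|I₂|` are at most
`k = |f(x) - f(y)| + |a| |f(y)|`. Hence `||I₁|² - |I₂|²| ≤ |I₁ - I₂| (|I₁| + |I₂|) ≤ |f(y)| a² k`,
and Cauchy–Schwarz together with `k² ≤ 4 (|f(x) - f(y)|² + C² a²)` gives the estimate.
-/

open MeasureTheory Complex

lemma hasDerivAt_exp_I_mul_ofReal_sub_one_sub (t : ℝ) :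
    HasDerivAt (fun s : ℝ => cexp (I * s) - 1 - I * s) (I * (cexp (I * t) - 1)) t := by
  have h : HasDerivAt (fun z : ℂ => cexp (I * z) - 1 - I * z) (I * (cexp (I * t) - 1)) t := by
    have hI := (hasDerivAt_id (t : ℂ)).const_mul I
    refine ((hI.cexp.sub_const 1).sub hI).congr_deriv ?_
    simp only [id, mul_one]
    ring
  exact h.comp_ofReal

lemma norm_exp_I_mul_ofReal_sub_one_sub_le_of_nonneg {t : ℝ} (ht : 0 ≤ t) :
    ‖cexp (I * t) - 1 - I * t‖ ≤ t ^ 2 / 2 := by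
  refine image_norm_le_of_norm_deriv_right_le_deriv_boundary (a := 0) (b := t)
    (B := fun s => s ^ 2 / 2) (B' := id) (Continuous.continuousOn (by fun_prop))
    (fun s _ => (hasDerivAt_exp_I_mul_ofReal_sub_one_sub s).hasDerivWithinAt) (by simp)
    (fun s => by simpa using (hasDerivAt_pow 2 s).div_const 2) (fun s hs => ?_) ⟨ht, le_rfl⟩
  simpa [abs_of_nonneg hs.1] using Real.norm_exp_I_mul_ofReal_sub_one_le (x := s)

lemma norm_exp_I_mul_ofReal_sub_one_sub_le (t : ℝ) :
    ‖cexp (I * t) - 1 - I * t‖ ≤ t ^ 2 / 2 := by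
  rcases le_total 0 t with ht | ht
  · exact norm_exp_I_mul_ofReal_sub_one_sub_le_of_nonneg ht
  · have h := norm_exp_I_mul_ofReal_sub_one_sub_le_of_nonneg (neg_nonneg.2 ht)
    rw [neg_sq, ← Complex.norm_conj, map_sub, map_sub, ← Complex.exp_conj] at h
    simpa using h

lemma abs_norm_sq_sub_norm_sq_le {E : Type*} [SeminormedAddCommGroup E] (u v : E) :
    |‖u‖ ^ 2 - ‖v‖ ^ 2| ≤ ‖u - v‖ * (‖u‖ + ‖v‖) := by
  rw [sq_sub_sq, abs_mul, abs_of_nonneg (by positivity : 0 ≤ ‖u‖ + ‖v‖), mul_comm]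
  exact mul_le_mul_of_nonneg_right (abs_norm_sub_norm_le u v) (by positivity)

lemma norm_sub_sub_I_mul_ofReal_mul_le (z w : ℂ) (t : ℝ) :
    ‖z - w - I * t * w‖ ≤ ‖z - w‖ + |t| * ‖w‖ := by
  simpa [Complex.norm_real] using norm_sub_le (z - w) (I * t * w)

lemma norm_sub_exp_I_mul_ofReal_mul_le (z w : ℂ) (t : ℝ) :
    ‖z - cexp (I * t) * w‖ ≤ ‖z - w‖ + |t| * ‖w‖ := by
  calc ‖z - cexp (I * t) * w‖ = ‖(z - w) - (cexp (I * t) - 1) * w‖ := by congr 1; ring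
    _ ≤ ‖z - w‖ + ‖cexp (I * t) - 1‖ * ‖w‖ := (norm_sub_le _ _).trans_eq (by rw [norm_mul])
    _ ≤ ‖z - w‖ + |t| * ‖w‖ := by
      gcongr
      exact Real.norm_exp_I_mul_ofReal_sub_one_le

lemma abs_norm_sq_sub_sub_I_mul_sub_norm_sq_sub_exp_I_mul_le (z w : ℂ) (t : ℝ) :
    |‖z - w - I * t * w‖ ^ 2 - ‖z - cexp (I * t) * w‖ ^ 2| ≤
      ‖w‖ * t ^ 2 * (‖z - w‖ + |t| * ‖w‖) := by
  have hdiff : ‖(z - w - I * t * w) - (z - cexp (I * t) * w)‖ ≤ t ^ 2 / 2 * ‖w‖ := by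
    rw [show (z - w - I * t * w) - (z - cexp (I * t) * w) = (cexp (I * t) - 1 - I * t) * w by
      ring, norm_mul]
    gcongr
    exact norm_exp_I_mul_ofReal_sub_one_sub_le t
  calc _ ≤ _ := abs_norm_sq_sub_norm_sq_le _ _
    _ ≤ t ^ 2 / 2 * ‖w‖ * (2 * (‖z - w‖ + |t| * ‖w‖)) := by
      gcongr
      linarith [norm_sub_sub_I_mul_ofReal_mul_le z w t, norm_sub_exp_I_mul_ofReal_mul_le z w t]
    _ = _ := by ring

section Integral

variable {α : Type*} [MeasurableSpace α] {μ : Measure α}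

lemma integral_mul_le_sqrt_integral_sq_mul_sqrt_integral_sq {g k : α → ℝ}
    (hg0 : 0 ≤ᵐ[μ] g) (hk0 : 0 ≤ᵐ[μ] k) (hg : MemLp g 2 μ) (hk : MemLp k 2 μ) :
    ∫ x, g x * k x ∂μ ≤ √(∫ x, g x ^ 2 ∂μ) * √(∫ x, k x ^ 2 ∂μ) := by
  have h := integral_mul_le_Lp_mul_Lq_of_nonneg Real.HolderConjugate.two_two hg0 hk0
    (by simpa using hg) (by simpa using hk)
  simpa only [Real.rpow_two, ← Real.sqrt_eq_rpow] using h

lemma abs_integral_sub_integral_le_of_abs_sub_le_mul {φ ψ g k : α → ℝ}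
    (hφ : Integrable φ μ) (hψ : Integrable ψ μ) (hg0 : 0 ≤ g) (hk0 : 0 ≤ k)
    (hg : MemLp g 2 μ) (hk : MemLp k 2 μ) (h : ∀ x, |φ x - ψ x| ≤ g x * k x) :
    |∫ x, φ x ∂μ - ∫ x, ψ x ∂μ| ≤ √(∫ x, g x ^ 2 ∂μ) * √(∫ x, k x ^ 2 ∂μ) := by
  calc |∫ x, φ x ∂μ - ∫ x, ψ x ∂μ| = |∫ x, (φ x - ψ x) ∂μ| := by rw [integral_sub hφ hψ]
    _ ≤ ∫ x, |φ x - ψ x| ∂μ := abs_integral_le_integral_abs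
    _ ≤ ∫ x, g x * k x ∂μ :=
      integral_mono_of_nonneg (.of_forall fun x => abs_nonneg _) (hg.integrable_mul hk)
        (.of_forall h)
    _ ≤ _ := integral_mul_le_sqrt_integral_sq_mul_sqrt_integral_sq (.of_forall hg0)
      (.of_forall hk0) hg hk

variable {z w : α → ℂ} {t : α → ℝ} {C : ℝ}

lemma memLp_two_norm_sub_add_abs_mul_norm (hz : AEStronglyMeasurable z μ)
    (hw : AEStronglyMeasurable w μ) (ht : AEStronglyMeasurable t μ) (hwC : ∀ x, ‖w x‖ ≤ C)
    (hzw : Integrable (fun x => ‖z x - w x‖ ^ 2) μ) (ht2 : Integrable (fun x => t x ^ 2) μ) :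
    MemLp (fun x => ‖z x - w x‖ + |t x| * ‖w x‖) 2 μ := by
  refine ((memLp_two_iff_integrable_sq (by fun_prop)).2 hzw).add
    (((memLp_two_iff_integrable_sq ht).2 ht2).const_mul C |>.of_le (by fun_prop)
      (.of_forall fun x => ?_))
  simp only [norm_mul, Real.norm_eq_abs, abs_abs]
  rw [mul_comm]
  gcongr
  exact hwC x

lemma integral_norm_sub_add_abs_mul_norm_sq_le (hwC : ∀ x, ‖w x‖ ≤ C)
    (hzw : Integrable (fun x => ‖z x - w x‖ ^ 2) μ) (ht2 : Integrable (fun x => t x ^ 2) μ) :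
    ∫ x, (‖z x - w x‖ + |t x| * ‖w x‖) ^ 2 ∂μ ≤
      2 ^ 2 * ((∫ x, ‖z x - w x‖ ^ 2 ∂μ) + C ^ 2 * ∫ x, t x ^ 2 ∂μ) := by
  rw [← integral_const_mul, ← integral_add hzw (ht2.const_mul _), ← integral_const_mul]
  refine integral_mono_of_nonneg (.of_forall fun x => sq_nonneg _)
    ((hzw.add (ht2.const_mul _)).const_mul _) (.of_forall fun x => ?_)
  have hwC2 : ‖w x‖ ^ 2 ≤ C ^ 2 := pow_le_pow_left₀ (norm_nonneg _) (hwC x) 2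
  have ht_sq : |t x| ^ 2 = t x ^ 2 := sq_abs _
  dsimp only
  nlinarith [sq_nonneg (‖z x - w x‖ - |t x| * ‖w x‖),
    mul_le_mul_of_nonneg_left hwC2 (sq_nonneg (t x))]

theorem abs_integral_norm_sq_sub_sub_I_mul_sub_integral_norm_sq_sub_exp_I_mul_le
    (hz : AEStronglyMeasurable z μ) (hw : AEStronglyMeasurable w μ)
    (ht : AEStronglyMeasurable t μ) (hwC : ∀ x, ‖w x‖ ≤ C)
    (hzw : Integrable (fun x => ‖z x - w x‖ ^ 2) μ) (ht2 : Integrable (fun x => t x ^ 2) μ)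
    (hwt4 : Integrable (fun x => ‖w x‖ ^ 2 * t x ^ 4) μ) :
    |(∫ x, ‖z x - w x - I * t x * w x‖ ^ 2 ∂μ) - ∫ x, ‖z x - cexp (I * t x) * w x‖ ^ 2 ∂μ| ≤
      2 * √(∫ x, ‖w x‖ ^ 2 * t x ^ 4 ∂μ) *
        √((∫ x, ‖z x - w x‖ ^ 2 ∂μ) + C ^ 2 * ∫ x, t x ^ 2 ∂μ) := by
  have hk := memLp_two_norm_sub_add_abs_mul_norm hz hw ht hwC hzw ht2
  have hg : MemLp (fun x => ‖w x‖ * t x ^ 2) 2 μ :=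
    (memLp_two_iff_integrable_sq (by fun_prop)).2 (hwt4.congr (.of_forall fun x => by ring))
  have hI₁ : Integrable (fun x => ‖z x - w x - I * t x * w x‖ ^ 2) μ :=
    (memLp_two_iff_integrable_sq_norm (by fun_prop)).1
      (hk.mono' (by fun_prop) (.of_forall fun x => norm_sub_sub_I_mul_ofReal_mul_le _ _ _))
  have hI₂ : Integrable (fun x => ‖z x - cexp (I * t x) * w x‖ ^ 2) μ :=
    (memLp_two_iff_integrable_sq_norm (by fun_prop)).1
      (hk.mono' (by fun_prop) (.of_forall fun x => norm_sub_exp_I_mul_ofReal_mul_le _ _ _))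
  have hg2 : ∫ x, (‖w x‖ * t x ^ 2) ^ 2 ∂μ = ∫ x, ‖w x‖ ^ 2 * t x ^ 4 ∂μ :=
    integral_congr_ae (.of_forall fun x => by ring)
  calc _ ≤ √(∫ x, (‖w x‖ * t x ^ 2) ^ 2 ∂μ) * √(∫ x, (‖z x - w x‖ + |t x| * ‖w x‖) ^ 2 ∂μ) :=
        abs_integral_sub_integral_le_of_abs_sub_le_mul hI₁ hI₂ (fun x => by positivity)
          (fun x => by positivity) hg hk
          fun x => abs_norm_sq_sub_sub_I_mul_sub_norm_sq_sub_exp_I_mul_le _ _ _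
    _ ≤ √(∫ x, ‖w x‖ ^ 2 * t x ^ 4 ∂μ) *
          (2 * √((∫ x, ‖z x - w x‖ ^ 2 ∂μ) + C ^ 2 * ∫ x, t x ^ 2 ∂μ)) := by
        rw [hg2, ← Real.sqrt_sq zero_le_two, ← Real.sqrt_mul (sq_nonneg 2)]
        gcongr
        exact integral_norm_sub_add_abs_mul_norm_sq_le hwC hzw ht2
    _ = _ := by ring

end Integral

/-- **Comparison of the linearized and the true magnetic difference** (the key estimate
comparing `I₁` and `I₂` in the proof of the magnetic Beurling–Deny decomposition,
Lemma 4.4 of the paper). With `I₁(x,y) = f(x) − f(y) − i a(x,y) f(y)` and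
`I₂(x,y) = f(x) − e^{i a(x,y)} f(y)` one has
`|∫|I₁|² dm − ∫|I₂|² dm| ≤ 2 (∫|f(y)|² a⁴ dm)^{1/2} (∫|f(x) − f(y)|² dm + C²∫a² dm)^{1/2}`. -/
theorem magnetic_linearization_estimate
    {X : Type*} [MeasurableSpace X] (m : Measure (X × X))
    (f : X → ℂ) (hf : Measurable f) (C : ℝ) (hC : ∀ x, ‖f x‖ ≤ C)
    (hdf : Integrable (fun p : X × X => ‖f p.1 - f p.2‖ ^ 2) m)
    (a : X × X → ℝ) (ha : Measurable a)
    (ha2 : Integrable (fun p : X × X => a p ^ 2) m)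
    (hfa4 : Integrable (fun p : X × X => ‖f p.2‖ ^ 2 * a p ^ 4) m) :
    |(∫ p, ‖f p.1 - f p.2 - Complex.I * (a p : ℂ) * f p.2‖ ^ 2 ∂m) -
        ∫ p, ‖f p.1 - Complex.exp (Complex.I * (a p : ℂ)) * f p.2‖ ^ 2 ∂m| ≤
      2 * Real.sqrt (∫ p, ‖f p.2‖ ^ 2 * a p ^ 4 ∂m) *
        Real.sqrt ((∫ p, ‖f p.1 - f p.2‖ ^ 2 ∂m) + C ^ 2 * (∫ p, a p ^ 2 ∂m)) :=
  abs_integral_norm_sq_sub_sub_I_mul_sub_integral_norm_sq_sub_exp_I_mul_le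
    (hf.comp measurable_fst).aestronglyMeasurable (hf.comp measurable_snd).aestronglyMeasurable
    ha.aestronglyMeasurable (fun p => hC p.2) hdf ha2 hfa4
end
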